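/- arXiv:2011.02270 — 2 statements merged into one kernel-verified Lean document; each statement's English description precedes it below -/
import Mathlib

section
/- Let α, β, γ be partitions with |α| + |β| = |γ|. If there exists a short exact sequence 0 → M_α → M_γ → M_β → 0 of C[t]-modules, where M_λ = ⊕ᵢ C[t]/(t^{λᵢ}), then γ ≤ α + β in the dominance order (where (α+β)ᵢ = αᵢ + βᵢ). -/
/-- `Mmod lam = ⊕ᵢ ℂ[t]/(t^{lam i})` as a `ℂ[t]`-module (summands with `lam i = 0` vanish). -/
abbrev Mmod (lam : ℕ → ℕ) : Type :=
  DirectSum ℕ (fun i => Polynomial ℂ ⧸ Ideal.span ({Polynomial.X ^ lam i} : Set (Polynomial ℂ)))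

open Polynomial Module

noncomputable section

abbrev Q (m : ℕ) : Type := Polynomial ℂ ⧸ Ideal.span ({Polynomial.X ^ m} : Set (Polynomial ℂ))

lemma Qsub' {m : ℕ} (h : m = 0) : Subsingleton (Q m) := by
  subst h
  refine (Submodule.Quotient.subsingleton_iff).2 ?_
  simp [Ideal.span_singleton_eq_top]

/-- mult by `X^(min j m)` : `Q (m-j) → Q m`. -/
def phi (j m : ℕ) : Q (m - j) →ₗ[Polynomial ℂ] Q m :=
  Submodule.mapQ _ _ (LinearMap.lsmul (Polynomial ℂ) (Polynomial ℂ) (X ^ min j m))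
    (by
      intro p hp
      simp only [Submodule.mem_comap, LinearMap.lsmul_apply, smul_eq_mul]
      rw [Ideal.mem_span_singleton] at hp ⊢
      obtain ⟨q, rfl⟩ := hp
      rw [← mul_assoc, ← pow_add]
      exact Dvd.dvd.mul_right (pow_dvd_pow X (by omega)) q)

/-- natural projection `Q m → Q (m-j)`. -/
def psi (j m : ℕ) : Q m →ₗ[Polynomial ℂ] Q (m - j) :=
  Submodule.mapQ _ _ LinearMap.id
    (by
      intro p hp
      simp only [Submodule.mem_comap, LinearMap.id_apply]
      rw [Ideal.mem_span_singleton] at hp ⊢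
      exact dvd_trans (pow_dvd_pow X (Nat.sub_le m j)) hp)

lemma phi_inj (j m : ℕ) : Function.Injective (phi j m) := by
  rcases le_or_gt m j with h | h
  · have : Subsingleton (Q (m - j)) := Qsub' (by omega)
    exact fun x y _ => Subsingleton.elim x y
  · rw [← LinearMap.ker_eq_bot]
    rw [Submodule.eq_bot_iff]
    intro x hx
    obtain ⟨p, rfl⟩ := Submodule.Quotient.mk_surjective _ x
    rw [LinearMap.mem_ker] at hx
    rw [phi, Submodule.mapQ_apply] at hx
    rw [Submodule.Quotient.mk_eq_zero] at hx ⊢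
    simp only [LinearMap.lsmul_apply, smul_eq_mul] at hx
    rw [Ideal.mem_span_singleton] at hx ⊢
    rw [min_eq_left h.le] at hx
    have hXj : (X : Polynomial ℂ) ^ j ≠ 0 := pow_ne_zero _ X_ne_zero
    have : (X:Polynomial ℂ) ^ j * X ^ (m - j) ∣ X ^ j * p := by
      rw [← pow_add]
      have : j + (m - j) = m := by omega
      rw [this]; exact hx
    exact (mul_dvd_mul_iff_left hXj).mp this

lemma psi_surj (j m : ℕ) : Function.Surjective (psi j m) := by
  intro y
  obtain ⟨p, rfl⟩ := Submodule.Quotient.mk_surjective _ y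
  exact ⟨Submodule.Quotient.mk p, by rw [psi, Submodule.mapQ_apply]; rfl⟩

lemma phi_psi (j m : ℕ) (x : Q m) : phi j m (psi j m x) = (X:Polynomial ℂ)^j • x := by
  obtain ⟨p, rfl⟩ := Submodule.Quotient.mk_surjective _ x
  rw [psi, Submodule.mapQ_apply, phi, Submodule.mapQ_apply]
  rw [← Submodule.Quotient.mk_smul]
  rcases le_or_gt j m with h | h
  · rw [min_eq_left h]; rfl
  · rw [min_eq_right h.le]
    rw [Submodule.Quotient.eq]
    simp only [LinearMap.id_apply, LinearMap.lsmul_apply, smul_eq_mul]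
    rw [Ideal.mem_span_singleton]
    have : (X:Polynomial ℂ)^m ∣ X ^ m * p - X ^ j * p := by
      apply dvd_sub (Dvd.dvd.mul_right dvd_rfl p)
      exact Dvd.dvd.mul_right (pow_dvd_pow X h.le) p
    simpa using this

instance Qfd (m : ℕ) : FiniteDimensional ℂ (Q m) :=
  Module.Finite.of_basis (AdjoinRoot.powerBasis' (monic_X_pow (R := ℂ) (n := m))).basis

lemma Q_finrank (m : ℕ) : finrank ℂ (Q m) = m := by
  have := (AdjoinRoot.powerBasis' (monic_X_pow (R := ℂ) (n := m))).finrank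
  simp at this
  exact this

def toPi (lam : ℕ → ℕ) (n : ℕ) : Mmod lam →ₗ[ℂ] (Π i : Fin n, Q (lam i)) :=
  LinearMap.pi (fun i => DirectSum.component ℂ ℕ (fun i => Q (lam i)) (i : ℕ))

lemma toPi_bij (lam : ℕ → ℕ) (n : ℕ) (hz : ∀ i, n ≤ i → lam i = 0) :
    Function.Bijective (toPi lam n) := by
  constructor
  · intro x y h
    refine DFinsupp.ext fun i => ?_
    rcases lt_or_ge i n with hi | hi
    · exact congrFun h ⟨i, hi⟩
    · have : Subsingleton (Q (lam i)) := Qsub' (hz i hi)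
      exact Subsingleton.elim _ _
  · intro y
    refine ⟨∑ i : Fin n, DirectSum.lof ℂ ℕ (fun i => Q (lam i)) (i : ℕ) (y i), ?_⟩
    funext i
    simp only [toPi, LinearMap.pi_apply, map_sum]
    rw [Finset.sum_eq_single i]
    · exact DirectSum.component.lof_self ℂ (ι := ℕ) (i := (i:ℕ)) _
    · intro j _ hji
      have : (j : ℕ) ≠ (i : ℕ) := fun h => hji (Fin.ext h)
      simp [DirectSum.component.of, this]
    · simp

lemma Mmod_finrank (lam : ℕ → ℕ) (n : ℕ) (hz : ∀ i, n ≤ i → lam i = 0) :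
    finrank ℂ (Mmod lam) = ∑ i ∈ Finset.range n, lam i := by
  have e := LinearEquiv.ofBijective (toPi lam n) (toPi_bij lam n hz)
  rw [e.finrank_eq, Module.finrank_pi_fintype, ← Fin.sum_univ_eq_sum_range]
  simp [Q_finrank]

lemma Mmod_fd (lam : ℕ → ℕ) (n : ℕ) (hz : ∀ i, n ≤ i → lam i = 0) :
    FiniteDimensional ℂ (Mmod lam) :=
  Module.Finite.equiv (LinearEquiv.ofBijective (toPi lam n) (toPi_bij lam n hz)).symm

def Phi (j : ℕ) (lam : ℕ → ℕ) : Mmod (fun i => lam i - j) →ₗ[Polynomial ℂ] Mmod lam :=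
  DFinsupp.mapRange.linearMap (fun i => phi j (lam i))

def Psi (j : ℕ) (lam : ℕ → ℕ) : Mmod lam →ₗ[Polynomial ℂ] Mmod (fun i => lam i - j) :=
  DFinsupp.mapRange.linearMap (fun i => psi j (lam i))

def Mu (j : ℕ) (lam : ℕ → ℕ) : Mmod lam →ₗ[Polynomial ℂ] Mmod lam :=
  LinearMap.lsmul (Polynomial ℂ) (Mmod lam) (X ^ j)

lemma Phi_inj (j : ℕ) (lam : ℕ → ℕ) : Function.Injective (Phi j lam) := by
  intro x y h
  refine DFinsupp.ext fun i => ?_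
  have := congrArg (fun z => z i) h
  simp only [Phi, DFinsupp.mapRange.linearMap_apply, DFinsupp.mapRange_apply] at this
  exact phi_inj j (lam i) this

lemma Psi_surj (j : ℕ) (lam : ℕ → ℕ) : Function.Surjective (Psi j lam) := by
  rw [← LinearMap.range_eq_top, Submodule.eq_top_iff']
  intro x
  induction x using DirectSum.induction_on with
  | zero => exact Submodule.zero_mem _
  | of i y =>
    obtain ⟨z, hzz⟩ := psi_surj j (lam i) y
    refine ⟨DirectSum.of _ i z, DFinsupp.ext fun i' => ?_⟩
    have happ : (Psi j lam (DirectSum.of _ i z)) i'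
        = psi j (lam i') ((DirectSum.of (fun i => Q (lam i)) i z) i') := rfl
    rw [happ]
    rcases eq_or_ne i i' with rfl | hne
    · rw [DirectSum.of_eq_same, DirectSum.of_eq_same, hzz]
    · rw [DirectSum.of_eq_of_ne _ _ _ hne.symm, DirectSum.of_eq_of_ne _ _ _ hne.symm, map_zero]
  | add x y hx hy => exact Submodule.add_mem _ hx hy

lemma Phi_Psi (j : ℕ) (lam : ℕ → ℕ) (x : Mmod lam) :
    Phi j lam (Psi j lam x) = Mu j lam x := by
  refine DFinsupp.ext fun i => ?_
  have h1 : (Phi j lam (Psi j lam x)) i = phi j (lam i) (psi j (lam i) (x i)) := rfl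
  rw [h1, phi_psi]
  rfl

lemma range_Mu_eq (j : ℕ) (lam : ℕ → ℕ) :
    LinearMap.range (Mu j lam) = LinearMap.range (Phi j lam) := by
  apply le_antisymm
  · rintro _ ⟨y, rfl⟩
    exact ⟨Psi j lam y, Phi_Psi j lam y⟩
  · rintro _ ⟨z, rfl⟩
    obtain ⟨y, rfl⟩ := Psi_surj j lam z
    exact ⟨y, (Phi_Psi j lam y).symm⟩

lemma range_rs {M N : Type} [AddCommGroup M] [AddCommGroup N]
    [Module (Polynomial ℂ) M] [Module (Polynomial ℂ) N]
    [Module ℂ M] [Module ℂ N] [IsScalarTower ℂ (Polynomial ℂ) M] [IsScalarTower ℂ (Polynomial ℂ) N]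
    (f : M →ₗ[Polynomial ℂ] N) :
    LinearMap.range (f.restrictScalars ℂ) = (LinearMap.range f).restrictScalars ℂ := by
  ext x
  simp [LinearMap.mem_range]

lemma rank_Mu (lam : ℕ → ℕ) (n j : ℕ) (hz : ∀ i, n ≤ i → lam i = 0) :
    finrank ℂ (LinearMap.range ((Mu j lam).restrictScalars ℂ))
      = ∑ i ∈ Finset.range n, (lam i - j) := by
  rw [LinearMap.range_restrictScalars, range_Mu_eq, ← LinearMap.range_restrictScalars]
  have e := LinearEquiv.ofInjective ((Phi j lam).restrictScalars ℂ)
    (show Function.Injective _ from Phi_inj j lam)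
  rw [← e.finrank_eq]
  exact Mmod_finrank _ n (fun i hi => by simp [hz i hi])

section LinAlg
variable {V W : Type*} [AddCommGroup V] [Module ℂ V] [FiniteDimensional ℂ V]
lemma rn_restricted {N : Type*} [AddCommGroup N] [Module ℂ N] (v : V →ₗ[ℂ] N) (W : Submodule ℂ V) :
    finrank ℂ (W.map v) + finrank ℂ (W ⊓ LinearMap.ker v : Submodule ℂ V) = finrank ℂ W := by
  have h := LinearMap.finrank_range_add_finrank_ker (v.domRestrict W)
  rw [LinearMap.range_domRestrict, LinearMap.ker_domRestrict] at h
  have hco : Submodule.comap W.subtype (LinearMap.ker v)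
      = Submodule.comap W.subtype (W ⊓ LinearMap.ker v) := by
    rw [Submodule.comap_inf, Submodule.comap_subtype_self, top_inf_eq]
  have e := (Submodule.comapSubtypeEquivOfLe
    (inf_le_left : W ⊓ LinearMap.ker v ≤ W)).finrank_eq
  rw [hco, e] at h
  exact h

/-- Key: for submodules U, A of findim V and endo v :
  `dim v(U) + dim (U ⊓ A) ≤ dim v(A) + dim U`. -/
lemma star_ineq (v : V →ₗ[ℂ] V) (U A : Submodule ℂ V) :
    finrank ℂ (U.map v) + finrank ℂ (U ⊓ A : Submodule ℂ V)
      ≤ finrank ℂ (A.map v) + finrank ℂ U := by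
  have h1 := rn_restricted v (U ⊓ A)
  have h2 := rn_restricted v U
  have h3 : finrank ℂ ((U ⊓ A).map v) ≤ finrank ℂ (A.map v) :=
    Submodule.finrank_mono (Submodule.map_mono inf_le_right)
  have h4 : finrank ℂ (U ⊓ A ⊓ LinearMap.ker v : Submodule ℂ V)
      ≤ finrank ℂ (U ⊓ LinearMap.ker v : Submodule ℂ V) :=
    Submodule.finrank_mono (inf_le_inf_right _ inf_le_left)
  omega

end LinAlg


lemma sum_tsub_le (c : ℕ → ℕ) (n k j : ℕ) (hz : ∀ i, n ≤ i → c i = 0) :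
    ∑ i ∈ Finset.range k, (c i - j) ≤ ∑ i ∈ Finset.range n, (c i - j) := by
  rcases le_total k n with h | h
  · exact Finset.sum_le_sum_of_subset (Finset.range_subset_range.2 h)
  · rw [← Finset.sum_subset (Finset.range_subset_range.2 h)]
    intro i hi hni
    simp only [Finset.mem_range, not_lt] at hni
    rw [hz i hni]
    omega

lemma comb1 (c : ℕ → ℕ) (n k j : ℕ) (hz : ∀ i, n ≤ i → c i = 0) :
    ∑ i ∈ Finset.range k, c i ≤ k * j + ∑ i ∈ Finset.range n, (c i - j) := by
  calc ∑ i ∈ Finset.range k, c i ≤ ∑ i ∈ Finset.range k, (j + (c i - j)) :=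
        Finset.sum_le_sum (fun i _ => by omega)
    _ = k * j + ∑ i ∈ Finset.range k, (c i - j) := by
        rw [Finset.sum_add_distrib, Finset.sum_const, Finset.card_range, smul_eq_mul]
    _ ≤ k * j + ∑ i ∈ Finset.range n, (c i - j) := by
        have := sum_tsub_le c n k j hz
        omega

lemma comb2 (a : ℕ → ℕ) (n k : ℕ) (ha : ∀ i, a (i + 1) ≤ a i) (hz : ∀ i, n ≤ i → a i = 0) :
    k * a k + ∑ i ∈ Finset.range n, (a i - a k) ≤ ∑ i ∈ Finset.range k, a i := by
  have hanti : ∀ i j, i ≤ j → a j ≤ a i := fun i j h =>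
    (antitone_nat_of_succ_le ha) h
  have h1 : ∑ i ∈ Finset.range n, (a i - a k) ≤ ∑ i ∈ Finset.range k, (a i - a k) := by
    rcases le_total n k with h | h
    · exact Finset.sum_le_sum_of_subset (Finset.range_subset_range.2 h)
    · rw [← Finset.sum_subset (Finset.range_subset_range.2 h)]
      intro i hi hni
      simp only [Finset.mem_range, not_lt] at hni
      have := hanti k i hni
      omega
  have h2 : k * a k + ∑ i ∈ Finset.range k, (a i - a k) = ∑ i ∈ Finset.range k, a i := by
    calc k * a k + ∑ i ∈ Finset.range k, (a i - a k)
        = ∑ i ∈ Finset.range k, (a k + (a i - a k)) := by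
          rw [Finset.sum_add_distrib, Finset.sum_const, Finset.card_range, smul_eq_mul]
      _ = ∑ i ∈ Finset.range k, a i := by
          refine Finset.sum_congr rfl fun i hi => ?_
          have := hanti i k (Finset.mem_range.1 hi).le
          omega
  omega

set_option maxHeartbeats 2000000 in
/-- If there is a short exact sequence `0 → M_α → M_γ → M_β → 0` of `ℂ[t]`-modules with
`|α| + |β| = |γ|`, then `γ ≤ α + β` in the dominance order. -/
theorem stmt4 (n : ℕ) (a b c : ℕ → ℕ)
    (ha_anti : ∀ i, a (i + 1) ≤ a i) (ha_zero : ∀ i, n ≤ i → a i = 0)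
    (hb_anti : ∀ i, b (i + 1) ≤ b i) (hb_zero : ∀ i, n ≤ i → b i = 0)
    (hc_anti : ∀ i, c (i + 1) ≤ c i) (hc_zero : ∀ i, n ≤ i → c i = 0)
    (hsize : ∑ i ∈ Finset.range n, a i + ∑ i ∈ Finset.range n, b i
              = ∑ i ∈ Finset.range n, c i)
    (f : Mmod a →ₗ[Polynomial ℂ] Mmod c) (g : Mmod c →ₗ[Polynomial ℂ] Mmod b)
    (hf : Function.Injective f) (hg : Function.Surjective g)
    (hfg : LinearMap.range f = LinearMap.ker g) :
    ∀ k, ∑ i ∈ Finset.range k, c i ≤ ∑ i ∈ Finset.range k, (a i + b i) := by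
  intro k
  haveI : FiniteDimensional ℂ (Mmod a) := Mmod_fd a n ha_zero
  haveI : FiniteDimensional ℂ (Mmod b) := Mmod_fd b n hb_zero
  haveI : FiniteDimensional ℂ (Mmod c) := Mmod_fd c n hc_zero
  set r := a k with hr
  set s := b k with hs
  set vC : Mmod c →ₗ[ℂ] Mmod c := (Mu r c).restrictScalars ℂ with hvC
  set uC : Mmod c →ₗ[ℂ] Mmod c := (Mu s c).restrictScalars ℂ with huC
  set U : Submodule ℂ (Mmod c) := LinearMap.range uC with hU
  set A' : Submodule ℂ (Mmod c) := LinearMap.range (f.restrictScalars ℂ) with hA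
  -- step 1 : dim of t^{r+s} C
  have hcomp : (Mu (r + s) c).restrictScalars ℂ = vC ∘ₗ uC :=
    LinearMap.ext fun x => by
      show (X ^ (r + s) : Polynomial ℂ) • x = (X ^ r : Polynomial ℂ) • (X ^ s : Polynomial ℂ) • x
      rw [pow_add, mul_smul]
  have step1 : ∑ i ∈ Finset.range n, (c i - (r + s))
      = Module.finrank ℂ (U.map vC) := by
    rw [← rank_Mu c n (r + s) hc_zero, hcomp, LinearMap.range_comp]
  -- step 2 : dim of map vC A' = dim t^r A
  have hfa : vC ∘ₗ (f.restrictScalars ℂ) = (f.restrictScalars ℂ) ∘ₗ ((Mu r a).restrictScalars ℂ) :=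
    LinearMap.ext fun x => by
      show (X ^ r : Polynomial ℂ) • f x = f ((X ^ r : Polynomial ℂ) • x)
      rw [map_smul]
  have step2 : Module.finrank ℂ (A'.map vC) = ∑ i ∈ Finset.range n, (a i - r) := by
    rw [hA, ← LinearMap.range_comp, hfa, LinearMap.range_comp,
      ← rank_Mu a n r ha_zero]
    exact ((Submodule.equivMapOfInjective (f.restrictScalars ℂ) hf _).finrank_eq).symm
  -- step 3 : dim of g(U) = dim t^s B, and U ⊓ ker
  have hgb : (g.restrictScalars ℂ) ∘ₗ uC = ((Mu s b).restrictScalars ℂ) ∘ₗ (g.restrictScalars ℂ) :=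
    LinearMap.ext fun x => by
      show g ((X ^ s : Polynomial ℂ) • x) = (X ^ s : Polynomial ℂ) • g x
      rw [map_smul]
  have hgsurj : LinearMap.range (g.restrictScalars ℂ) = ⊤ := by
    rw [LinearMap.range_eq_top]
    exact hg
  have step3 : Module.finrank ℂ (U.map (g.restrictScalars ℂ))
      = ∑ i ∈ Finset.range n, (b i - s) := by
    rw [hU, ← LinearMap.range_comp, hgb, LinearMap.range_comp, hgsurj,
      Submodule.map_top, ← rank_Mu b n s hb_zero]
  -- step 4 : ker g = A'
  have hker : LinearMap.ker (g.restrictScalars ℂ) = A' := by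
    rw [hA, LinearMap.range_restrictScalars, LinearMap.ker_restrictScalars, hfg]
  -- rank-nullity for g restricted to U
  have rn : Module.finrank ℂ (U.map (g.restrictScalars ℂ))
      + Module.finrank ℂ (U ⊓ A' : Submodule ℂ (Mmod c)) = Module.finrank ℂ U := by
    have h := rn_restricted (V := Mmod c) (N := Mmod b) (g.restrictScalars ℂ) U
    rw [hker] at h
    exact h
  have star := star_ineq (V := Mmod c) vC U A'
  have key : Module.finrank ℂ (U.map vC)
      ≤ ∑ i ∈ Finset.range n, (a i - r) + ∑ i ∈ Finset.range n, (b i - s) := by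
    omega
  have c1 := comb1 c n k (r + s) hc_zero
  have c2 := comb2 a n k ha_anti ha_zero
  have c3 := comb2 b n k hb_anti hb_zero
  rw [← hr] at c2
  rw [← hs] at c3
  have : ∑ i ∈ Finset.range k, (a i + b i)
      = ∑ i ∈ Finset.range k, a i + ∑ i ∈ Finset.range k, b i := Finset.sum_add_distrib
  have hmul : k * (r + s) = k * r + k * s := by ring
  omega

end
end

section
/- Let V ⊆ W be finite-dimensional complex vector spaces and x : W → W a nilpotent linear map with x(V) ⊆ V. If x restricted to V has Jordan type α, the induced map on W/V has Jordan type β, and x on W has Jordan type γ, then |α| + |β| = |γ| (i.e. dim V + dim W/V = dim W) and γ₁ ≤ α₁ + β₁. -/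
/-- `x` has Jordan type the partition `lam` (with at most `n` parts): `lam` is weakly
decreasing, vanishes from index `n` on, and `rank (x^k) = Σᵢ max(lamᵢ − k, 0)` for all `k`
(in particular, taking `k = 0`, `Σᵢ lamᵢ` is the dimension of the underlying space). -/
def HasJordanType {M : Type*} [AddCommGroup M] [Module ℂ M]
    (x : M →ₗ[ℂ] M) (n : ℕ) (lam : ℕ → ℕ) : Prop :=
  (∀ i, lam (i + 1) ≤ lam i) ∧ (∀ i, n ≤ i → lam i = 0) ∧
    (∀ k, Module.finrank ℂ (LinearMap.range (x ^ k)) = ∑ i ∈ Finset.range n, (lam i - k))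

private lemma jt_le_zero {lam : ℕ → ℕ} (h : ∀ i, lam (i + 1) ≤ lam i) (i : ℕ) :
    lam i ≤ lam 0 := by
  induction i with
  | zero => exact le_rfl
  | succ n ih => exact (h n).trans ih

private lemma range_pow_zero {M : Type*} [AddCommGroup M] [Module ℂ M] [FiniteDimensional ℂ M]
    (x : M →ₗ[ℂ] M) :
    Module.finrank ℂ (LinearMap.range (x ^ 0)) = Module.finrank ℂ M := by
  rw [pow_zero, Module.End.one_eq_id, LinearMap.range_id]
  exact finrank_top ℂ M

/-- If the Jordan type is `lam`, then `x ^ (lam 0) = 0`. -/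
private lemma jt_pow_eq_zero {M : Type*} [AddCommGroup M] [Module ℂ M] [FiniteDimensional ℂ M]
    {x : M →ₗ[ℂ] M} {n : ℕ} {lam : ℕ → ℕ} (h : HasJordanType x n lam) :
    x ^ (lam 0) = 0 := by
  obtain ⟨hmono, -, hrank⟩ := h
  have h0 : Module.finrank ℂ (LinearMap.range (x ^ lam 0)) = 0 := by
    rw [hrank]
    exact Finset.sum_eq_zero fun i _ => Nat.sub_eq_zero_of_le (jt_le_zero hmono i)
  have := Submodule.finrank_eq_zero.mp h0
  rwa [LinearMap.range_eq_bot] at this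

/-- If a nilpotent endomorphism `x` of a finite-dimensional space `W` preserves `V`, acts on
`V` with Jordan type `α`, on `W/V` with Jordan type `β` and on `W` with Jordan type `γ`,
then `|α| + |β| = |γ|` (i.e. `dim V + dim W/V = dim W`) and `γ₁ ≤ α₁ + β₁`. -/
theorem stmt7 {W : Type*} [AddCommGroup W] [Module ℂ W] [FiniteDimensional ℂ W]
    (V : Submodule ℂ W) (x : W →ₗ[ℂ] W) (hnil : IsNilpotent x)
    (hV : ∀ v ∈ V, x v ∈ V)
    (na nb nc : ℕ) (a b c : ℕ → ℕ)
    (ha : HasJordanType (x.restrict hV) na a)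
    (hb : HasJordanType (Submodule.mapQ V V x hV) nb b)
    (hc : HasJordanType x nc c) :
    (∑ i ∈ Finset.range na, a i) + (∑ i ∈ Finset.range nb, b i)
        = ∑ i ∈ Finset.range nc, c i
      ∧ Module.finrank ℂ V + Module.finrank ℂ (W ⧸ V) = Module.finrank ℂ W
      ∧ c 0 ≤ a 0 + b 0 := by
  have hdim : Module.finrank ℂ V + Module.finrank ℂ (W ⧸ V) = Module.finrank ℂ W :=
    by rw [add_comm]; exact Submodule.finrank_quotient_add_finrank V
  -- the sums at k = 0 are the dimensions
  have hsa : ∑ i ∈ Finset.range na, a i = Module.finrank ℂ V := by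
    have := ha.2.2 0
    rw [range_pow_zero] at this
    simpa using this.symm
  have hsb : ∑ i ∈ Finset.range nb, b i = Module.finrank ℂ (W ⧸ V) := by
    have := hb.2.2 0
    rw [range_pow_zero] at this
    simpa using this.symm
  have hsc : ∑ i ∈ Finset.range nc, c i = Module.finrank ℂ W := by
    have := hc.2.2 0
    rw [range_pow_zero] at this
    simpa using this.symm
  refine ⟨by rw [hsa, hsb, hsc]; exact hdim, hdim, ?_⟩
  -- x ^ (a 0 + b 0) = 0
  have hVle : V ≤ V.comap x := fun v hv => hV v hv
  have hqa : (x.restrict hV) ^ (a 0) = 0 := jt_pow_eq_zero ha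
  have hqb : (Submodule.mapQ V V x hV) ^ (b 0) = 0 := jt_pow_eq_zero hb
  have hpow : x ^ (a 0 + b 0) = 0 := by
    ext w
    have hqb' : V.mapQ V (x ^ b 0) (V.le_comap_pow_of_le_comap hVle (b 0)) = 0 := by
      rw [Submodule.mapQ_pow]; exact hqb
    have h1 : (x ^ (b 0)) w ∈ V := by
      have := congrArg (fun f => f (Submodule.Quotient.mk w)) hqb'
      simp only [Submodule.mapQ_apply, LinearMap.zero_apply] at this
      exact (Submodule.Quotient.mk_eq_zero V).mp this
    have h2 : ∀ v ∈ V, (x ^ (a 0)) v = 0 := by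
      intro v hv
      have := congrArg (fun f => f ⟨v, hv⟩) hqa
      rw [Module.End.pow_restrict] at this
      simp only [LinearMap.restrict_apply, LinearMap.zero_apply] at this
      exact congrArg Subtype.val this
    have : (x ^ (a 0 + b 0)) w = (x ^ (a 0)) ((x ^ (b 0)) w) := by
      rw [pow_add, Module.End.mul_apply]
    rw [this, h2 _ h1]
    simp
  -- hence each c i ≤ a 0 + b 0
  have hr := hc.2.2 (a 0 + b 0)
  rw [hpow] at hr
  rw [LinearMap.range_zero, finrank_bot] at hr
  rcases Nat.eq_zero_or_pos nc with h0 | h0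
  · rw [hc.2.1 0 (by omega)]; omega
  · have := (Finset.sum_eq_zero_iff.mp hr.symm) 0 (Finset.mem_range.mpr h0)
    omega
end
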